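/- arXiv:2106.12969 — 3 statements merged into one kernel-verified Lean document; each statement's English description precedes it below -/
import Mathlib

section
/- Let R and B be disjoint finite sets of points in ℝ² and S = R ∪ B. If Z is a simultaneous boxes class cover of S consisting of k boxes, then there exists a simultaneous boxes class cover Z' of S consisting of at most k boxes such that every box of Z' covers at least one point of S, every box of Z' is contained in a box of Z, and every box of Z' covering a red point is disjoint, as a closed set, from every box of Z' covering a blue point. -/
/-!
Discard the boxes of `Z` that cover no point of `S`, and shrink each remaining box to a box
lying in its interior that still covers the same points of `S`; this is possible because
they are finitely many. A box of the result covering a red point and one covering a blue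
point then lie in the interiors of a red and a blue box of `Z`, which are disjoint.
-/

/-- An axis-aligned box: a closed rectangle `[a₁,b₁] × [a₂,b₂]` with nonempty interior. -/
def IsBox (K : Set (ℝ × ℝ)) : Prop :=
  ∃ a₁ b₁ a₂ b₂ : ℝ, a₁ < b₁ ∧ a₂ < b₂ ∧ K = Set.Icc a₁ b₁ ×ˢ Set.Icc a₂ b₂

/-- `Z` (a family of `k` boxes) is a simultaneous boxes class cover of the bichromatic
point set with red points `R` and blue points `B`: all boxes are axis-aligned boxes,
every point of `R ∪ B` lies in the interior of some box, no box covers (has in its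
interior) both a red and a blue point, and any box covering a red point has interior
disjoint from the interior of any box covering a blue point. -/
def IsSBCC (R B : Set (ℝ × ℝ)) (k : ℕ) (Z : Fin k → Set (ℝ × ℝ)) : Prop :=
  (∀ i, IsBox (Z i)) ∧
  (∀ p ∈ R ∪ B, ∃ i, p ∈ interior (Z i)) ∧
  (∀ i, ¬((∃ r ∈ R, r ∈ interior (Z i)) ∧ (∃ b ∈ B, b ∈ interior (Z i)))) ∧
  (∀ i j, (∃ r ∈ R, r ∈ interior (Z i)) → (∃ b ∈ B, b ∈ interior (Z j)) →
    interior (Z i) ∩ interior (Z j) = ∅)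

theorem Set.Finite.exists_Ioo_superset_of_subset_Ioo {s : Set ℝ} {a b : ℝ} (hs : s.Finite)
    (hab : a < b) (hsub : s ⊆ Set.Ioo a b) :
    ∃ a' b', a < a' ∧ a' < b' ∧ b' < b ∧ s ⊆ Set.Ioo a' b' := by
  -- the midpoint keeps the hull `[lo, hi]` nonempty even when `s` is empty
  set t := insert ((a + b) / 2) s
  have ht : t ⊆ Set.Ioo a b := Set.insert_subset ⟨by linarith, by linarith⟩ hsub
  obtain ⟨lo, hlo, hlo_le⟩ := Set.exists_min_image t id (hs.insert _) (Set.insert_nonempty _ _)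
  obtain ⟨hi, hhi, le_hi⟩ := Set.exists_max_image t id (hs.insert _) (Set.insert_nonempty _ _)
  have hlohi : lo ≤ hi := hlo_le hi hhi
  refine ⟨(a + lo) / 2, (hi + b) / 2, by linarith [(ht hlo).1], by linarith,
    by linarith [(ht hhi).2], fun x hx => ?_⟩
  have hlox : lo ≤ x := hlo_le x (Set.mem_insert_of_mem _ hx)
  have hxhi : x ≤ hi := le_hi x (Set.mem_insert_of_mem _ hx)
  exact ⟨by linarith [(ht hlo).1], by linarith [(ht hhi).2]⟩

theorem interior_Icc_prod_Icc (a₁ b₁ a₂ b₂ : ℝ) :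
    interior (Set.Icc a₁ b₁ ×ˢ Set.Icc a₂ b₂) = Set.Ioo a₁ b₁ ×ˢ Set.Ioo a₂ b₂ := by
  rw [interior_prod_eq, interior_Icc, interior_Icc]

theorem IsBox.exists_isBox_subset_interior {K : Set (ℝ × ℝ)} (hK : IsBox K)
    {P : Set (ℝ × ℝ)} (hP : P.Finite) (hPK : P ⊆ interior K) :
    ∃ K', IsBox K' ∧ K' ⊆ interior K ∧ P ⊆ interior K' := by
  obtain ⟨a₁, b₁, a₂, b₂, h₁, h₂, rfl⟩ := hK
  rw [interior_Icc_prod_Icc] at hPK ⊢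
  obtain ⟨a₁', b₁', ha₁, h₁', hb₁, hP₁⟩ :=
    (hP.image Prod.fst).exists_Ioo_superset_of_subset_Ioo h₁
      (Set.image_subset_iff.2 fun p hp => (hPK hp).1)
  obtain ⟨a₂', b₂', ha₂, h₂', hb₂, hP₂⟩ :=
    (hP.image Prod.snd).exists_Ioo_superset_of_subset_Ioo h₂
      (Set.image_subset_iff.2 fun p hp => (hPK hp).2)
  refine ⟨Set.Icc a₁' b₁' ×ˢ Set.Icc a₂' b₂', ⟨a₁', b₁', a₂', b₂', h₁', h₂', rfl⟩,
    Set.prod_mono (Set.Icc_subset_Ioo ha₁ hb₁) (Set.Icc_subset_Ioo ha₂ hb₂), ?_⟩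
  rw [interior_Icc_prod_Icc]
  exact Set.subset_prod.trans (Set.prod_mono hP₁ hP₂)

namespace IsSBCC

variable {R B : Set (ℝ × ℝ)} {k m : ℕ} {Z : Fin k → Set (ℝ × ℝ)} {Z' : Fin m → Set (ℝ × ℝ)}

theorem of_subset (hZ : IsSBCC R B k Z) (σ : Fin m → Fin k) (hbox : ∀ j, IsBox (Z' j))
    (hsub : ∀ j, Z' j ⊆ Z (σ j)) (hcov : ∀ p ∈ R ∪ B, ∃ j, p ∈ interior (Z' j)) :
    IsSBCC R B m Z' := by
  obtain ⟨-, -, hmono, hdisj⟩ := hZ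
  have hint j : interior (Z' j) ⊆ interior (Z (σ j)) := interior_mono (hsub j)
  refine ⟨hbox, hcov, fun j ⟨⟨r, hr, hrj⟩, ⟨b, hb, hbj⟩⟩ => ?_,
    fun i j ⟨r, hr, hri⟩ ⟨b, hb, hbj⟩ => ?_⟩
  · exact hmono (σ j) ⟨⟨r, hr, hint j hrj⟩, ⟨b, hb, hint j hbj⟩⟩
  · exact Set.subset_eq_empty (Set.inter_subset_inter (hint i) (hint j))
      (hdisj (σ i) (σ j) ⟨r, hr, hint i hri⟩ ⟨b, hb, hint j hbj⟩)

theorem inter_eq_empty_of_subset_interior (hZ : IsSBCC R B k Z) (σ : Fin m → Fin k)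
    (hsub : ∀ j, Z' j ⊆ interior (Z (σ j))) (i j : Fin m)
    (hi : ∃ r ∈ R, r ∈ interior (Z' i)) (hj : ∃ b ∈ B, b ∈ interior (Z' j)) :
    Z' i ∩ Z' j = ∅ := by
  obtain ⟨r, hr, hri⟩ := hi
  obtain ⟨b, hb, hbj⟩ := hj
  have hint j : interior (Z' j) ⊆ interior (Z (σ j)) := interior_subset.trans (hsub j)
  exact Set.subset_eq_empty (Set.inter_subset_inter (hsub i) (hsub j))
    (hZ.2.2.2 (σ i) (σ j) ⟨r, hr, hint i hri⟩ ⟨b, hb, hint j hbj⟩)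

end IsSBCC

theorem sbcc_shrink_to_separated_general (R B : Set (ℝ × ℝ))
    (hRfin : R.Finite) (hBfin : B.Finite)
    (k : ℕ) (Z : Fin k → Set (ℝ × ℝ)) (hZ : IsSBCC R B k Z) :
    ∃ (m : ℕ) (Z' : Fin m → Set (ℝ × ℝ)), m ≤ k ∧ IsSBCC R B m Z' ∧
      (∀ i : Fin m, ∃ p ∈ R ∪ B, p ∈ interior (Z' i)) ∧
      (∀ i : Fin m, ∃ j : Fin k, Z' i ⊆ Z j) ∧
      (∀ i j : Fin m, (∃ r ∈ R, r ∈ interior (Z' i)) →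
        (∃ b ∈ B, b ∈ interior (Z' j)) → Z' i ∩ Z' j = ∅) := by
  classical
  let T := {i : Fin k // ∃ p ∈ R ∪ B, p ∈ interior (Z i)}
  let e : Fin (Fintype.card T) ≃ T := (Fintype.equivFin T).symm
  choose Z' hbox hsub hcov using fun j : Fin (Fintype.card T) =>
    (hZ.1 (e j).1).exists_isBox_subset_interior ((hRfin.union hBfin).inter_of_left _)
      (Set.inter_subset_right (s := R ∪ B))
  have hcard : Fintype.card T ≤ k :=
    (Fintype.card_le_of_injective _ Subtype.val_injective).trans_eq (Fintype.card_fin k)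
  refine ⟨Fintype.card T, Z', hcard,
    hZ.of_subset (fun j => (e j).1) hbox (fun j => (hsub j).trans interior_subset) ?_,
    fun j => ?_, fun j => ⟨(e j).1, (hsub j).trans interior_subset⟩,
    hZ.inter_eq_empty_of_subset_interior (fun j => (e j).1) hsub⟩
  · intro p hp
    obtain ⟨i, hpi⟩ := hZ.2.1 p hp
    exact ⟨e.symm ⟨i, p, hp, hpi⟩, hcov _ ⟨hp, by rwa [Equiv.apply_symm_apply]⟩⟩
  · obtain ⟨p, hp, hpj⟩ := (e j).2
    exact ⟨p, hp, hcov j ⟨hp, hpj⟩⟩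

/-- From any SBCC `Z` of `S = R ∪ B` with `k` boxes one obtains an SBCC
`Z'` with at most `k` boxes such that every box of `Z'` covers a point of `S`, every box
of `Z'` is contained in some box of `Z`, and every box of `Z'` covering a red point is
disjoint (as a closed set) from every box of `Z'` covering a blue point. -/
theorem sbcc_shrink_to_separated (R B : Set (ℝ × ℝ))
    (hRfin : R.Finite) (hBfin : B.Finite) (hRB : Disjoint R B)
    (k : ℕ) (Z : Fin k → Set (ℝ × ℝ)) (hZ : IsSBCC R B k Z) :
    ∃ (m : ℕ) (Z' : Fin m → Set (ℝ × ℝ)), m ≤ k ∧ IsSBCC R B m Z' ∧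
      (∀ i : Fin m, ∃ p ∈ R ∪ B, p ∈ interior (Z' i)) ∧
      (∀ i : Fin m, ∃ j : Fin k, Z' i ⊆ Z j) ∧
      (∀ i j : Fin m, (∃ r ∈ R, r ∈ interior (Z' i)) →
        (∃ b ∈ B, b ∈ interior (Z' j)) → Z' i ∩ Z' j = ∅) :=
  sbcc_shrink_to_separated_general R B hRfin hBfin k Z hZ
end

section
/- Let P be a finite union of axis-aligned boxes and let v be a convex vertex of P (a boundary point of P admitting an open neighborhood N with P ∩ N = Q ∩ N for a closed axis-aligned quadrant Q with corner v). Then v is a corner of one of the boxes in the union. -/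
/-- A closed axis-aligned quadrant with corner `v`. -/
def IsQuadrantAt (v : ℝ × ℝ) (Q : Set (ℝ × ℝ)) : Prop :=
  ∃ sx sy : Bool,
    Q = {p : ℝ × ℝ | (if sx then v.1 ≤ p.1 else p.1 ≤ v.1) ∧
                     (if sy then v.2 ≤ p.2 else p.2 ≤ v.2)}

/-- A closed axis-parallel half-plane whose boundary line passes through `v`. -/
def IsHalfPlaneAt (v : ℝ × ℝ) (H : Set (ℝ × ℝ)) : Prop :=
  H = {p : ℝ × ℝ | p.1 ≤ v.1} ∨ H = {p : ℝ × ℝ | v.1 ≤ p.1} ∨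
  H = {p : ℝ × ℝ | p.2 ≤ v.2} ∨ H = {p : ℝ × ℝ | v.2 ≤ p.2}

/-- An edge point of `P`. -/
def IsEdgePointOf (P : Set (ℝ × ℝ)) (v : ℝ × ℝ) : Prop :=
  v ∈ frontier P ∧
    ∃ N H : Set (ℝ × ℝ), IsOpen N ∧ v ∈ N ∧ IsHalfPlaneAt v H ∧ P ∩ N = H ∩ N

/-- A convex vertex of `P`. -/
def IsConvexVertexOf (P : Set (ℝ × ℝ)) (v : ℝ × ℝ) : Prop :=
  v ∈ frontier P ∧
    ∃ N Q : Set (ℝ × ℝ), IsOpen N ∧ v ∈ N ∧ IsQuadrantAt v Q ∧ P ∩ N = Q ∩ N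

/-- A reflex vertex of `P`. -/
def IsReflexVertexOf (P : Set (ℝ × ℝ)) (v : ℝ × ℝ) : Prop :=
  v ∈ frontier P ∧
    ∃ N Q : Set (ℝ × ℝ), IsOpen N ∧ v ∈ N ∧ IsQuadrantAt v Q ∧ closure Pᶜ ∩ N = Q ∩ N

/-- `P` is a finite union of axis-aligned boxes. -/
def IsFiniteUnionOfBoxes (P : Set (ℝ × ℝ)) : Prop :=
  ∃ (n : ℕ) (b : Fin n → Set (ℝ × ℝ)), (∀ i, IsBox (b i)) ∧ P = ⋃ i, b i

/-- A rectilinear polygon: compact, connected, a finite union of axis-aligned boxes, and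
every boundary point is of exactly one of the three types. -/
def IsRectilinearPolygon (P : Set (ℝ × ℝ)) : Prop :=
  IsCompact P ∧ IsConnected P ∧ IsFiniteUnionOfBoxes P ∧
  ∀ v ∈ frontier P,
    (IsEdgePointOf P v ∧ ¬IsConvexVertexOf P v ∧ ¬IsReflexVertexOf P v) ∨
    (¬IsEdgePointOf P v ∧ IsConvexVertexOf P v ∧ ¬IsReflexVertexOf P v) ∨
    (¬IsEdgePointOf P v ∧ ¬IsConvexVertexOf P v ∧ IsReflexVertexOf P v)

/-- `C` is a hole of `P`: a bounded connected component of the complement of `P`. -/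
def IsHoleOf (P C : Set (ℝ × ℝ)) : Prop :=
  ∃ x, x ∉ P ∧ Bornology.IsBounded (connectedComponentIn Pᶜ x) ∧
    C = connectedComponentIn Pᶜ x

/-- `v` is a corner of the axis-aligned box `K`. -/
def IsCornerOf (v : ℝ × ℝ) (K : Set (ℝ × ℝ)) : Prop :=
  ∃ a₁ b₁ a₂ b₂ : ℝ, a₁ < b₁ ∧ a₂ < b₂ ∧ K = Set.Icc a₁ b₁ ×ˢ Set.Icc a₂ b₂ ∧
    (v = (a₁, a₂) ∨ v = (a₁, b₂) ∨ v = (b₁, a₂) ∨ v = (b₁, b₂))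

/-! A box `K` of the union containing `v` lies in `P`, hence near `v` in the quadrant `Q`. If a
coordinate of `v` were interior to the corresponding side of `K`, one could move from `v` inside
`K` along that axis in both directions, and one of them leaves `Q`. A box containing `v` exists
because `v ∈ Q ∩ N = P ∩ N`. -/

open Set Filter Topology

section EndpointOfInterval

variable {α : Type*} [LinearOrder α] [TopologicalSpace α] [OrderTopology α] [DenselyOrdered α]

theorem eq_left_of_eventually_mem_Icc_imp_le [NoMinOrder α] {a b x : α} (hx : x ∈ Icc a b)
    (h : ∀ᶠ y in 𝓝 x, y ∈ Icc a b → x ≤ y) : x = a := by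
  by_contra hne
  have hax : a < x := lt_of_le_of_ne hx.1 (Ne.symm hne)
  obtain ⟨y, hy, hyI⟩ := (h.filter_mono nhdsWithin_le_nhds |>.and (Ioo_mem_nhdsLT hax)).exists
  exact (hy ⟨hyI.1.le, hyI.2.le.trans hx.2⟩).not_gt hyI.2

theorem eq_right_of_eventually_mem_Icc_imp_ge [NoMaxOrder α] {a b x : α} (hx : x ∈ Icc a b)
    (h : ∀ᶠ y in 𝓝 x, y ∈ Icc a b → y ≤ x) : x = b := by
  by_contra hne
  have hxb : x < b := lt_of_le_of_ne hx.2 hne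
  obtain ⟨y, hy, hyI⟩ := (h.filter_mono nhdsWithin_le_nhds |>.and (Ioo_mem_nhdsGT hxb)).exists
  exact (hy ⟨hx.1.trans hyI.1.le, hyI.2.le⟩).not_gt hyI.1

theorem eq_or_eq_of_eventually_mem_Icc_imp [NoMinOrder α] [NoMaxOrder α] {a b x : α}
    (hx : x ∈ Icc a b) (s : Bool)
    (h : ∀ᶠ y in 𝓝 x, y ∈ Icc a b → if s then x ≤ y else y ≤ x) : x = a ∨ x = b := by
  cases s
  · exact Or.inr (eq_right_of_eventually_mem_Icc_imp_ge hx (by simpa using h))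
  · exact Or.inl (eq_left_of_eventually_mem_Icc_imp_le hx (by simpa using h))

end EndpointOfInterval

theorem IsQuadrantAt.self_mem {v : ℝ × ℝ} {Q : Set (ℝ × ℝ)} (hQ : IsQuadrantAt v Q) : v ∈ Q := by
  obtain ⟨sx, sy, rfl⟩ := hQ
  cases sx <;> cases sy <;> simp

theorem isCornerOf_of_eventually_mem_imp_mem_quadrant {K Q : Set (ℝ × ℝ)} {v : ℝ × ℝ}
    (hK : IsBox K) (hvK : v ∈ K) (hQ : IsQuadrantAt v Q) (hKQ : ∀ᶠ p in 𝓝 v, p ∈ K → p ∈ Q) :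
    IsCornerOf v K := by
  obtain ⟨a₁, b₁, a₂, b₂, h₁, h₂, rfl⟩ := hK
  obtain ⟨sx, sy, rfl⟩ := hQ
  obtain ⟨hv₁, hv₂⟩ := mem_prod.1 hvK
  have horizontal := (Continuous.prodMk_left v.2).tendsto' v.1 v rfl |>.eventually hKQ
  have vertical := (Continuous.prodMk_right v.1).tendsto' v.2 v rfl |>.eventually hKQ
  have hx : v.1 = a₁ ∨ v.1 = b₁ := eq_or_eq_of_eventually_mem_Icc_imp hv₁ sx <|
    horizontal.mono fun y hy hyI => (hy ⟨hyI, hv₂⟩).1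
  have hy : v.2 = a₂ ∨ v.2 = b₂ := eq_or_eq_of_eventually_mem_Icc_imp hv₂ sy <|
    vertical.mono fun y hy hyI => (hy ⟨hv₁, hyI⟩).2
  refine ⟨a₁, b₁, a₂, b₂, h₁, h₂, rfl, ?_⟩
  rcases hx with hx | hx <;> rcases hy with hy | hy <;> simp [Prod.ext_iff, hx, hy]

/-- If `P` is a finite union of axis-aligned boxes and `v` is a convex
vertex of `P`, then `v` is a corner of one of the boxes in the union. -/
theorem convex_vertex_is_box_corner (n : ℕ) (b : Fin n → Set (ℝ × ℝ))
    (hb : ∀ i, IsBox (b i)) (P : Set (ℝ × ℝ)) (hP : P = ⋃ i, b i)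
    (v : ℝ × ℝ) (hv : IsConvexVertexOf P v) :
    ∃ i : Fin n, IsCornerOf v (b i) := by
  obtain ⟨-, N, Q, hN, hvN, hQ, hPQ⟩ := hv
  have mem_Q_of_mem_P : ∀ p ∈ N, p ∈ P → p ∈ Q := fun p hpN hpP =>
    (show p ∈ Q ∩ N from hPQ ▸ ⟨hpP, hpN⟩).1
  have hvP : v ∈ P := (show v ∈ P ∩ N from hPQ ▸ ⟨hQ.self_mem, hvN⟩).1
  obtain ⟨i, hvi⟩ := mem_iUnion.1 (hP ▸ hvP)
  refine ⟨i, isCornerOf_of_eventually_mem_imp_mem_quadrant (hb i) hvi hQ ?_⟩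
  filter_upwards [hN.mem_nhds hvN] with p hpN hpi
  exact mem_Q_of_mem_P p hpN (hP ▸ mem_iUnion_of_mem i hpi)
end

section
/- Let P be a rectilinear polygon with c convex vertices. Then any finite family of axis-aligned boxes whose union equals P contains at least c/4 boxes. -/
/-!
A convex vertex `v` of `P` cannot lie in the relative interior of a horizontal or vertical
segment contained in `P`, because near `v` the set `P` is a quadrant with corner `v`. Hence if
`v` lies in a box contained in `P`, it is one of the four corners of that box, and a cover by
`n` boxes provides at most `4 n` candidate positions for the convex vertices.
-/

open Filter Topology

namespace IsQuadrantAt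

variable {v : ℝ × ℝ} {Q : Set (ℝ × ℝ)}

lemma not_eventually_fst (hQ : IsQuadrantAt v Q) : ¬ ∀ᶠ x in 𝓝 v.1, (x, v.2) ∈ Q := by
  obtain ⟨sx, sy, rfl⟩ := hQ
  intro h
  cases sx
  · obtain ⟨x, hvx, hxv⟩ := (h.mono fun x hx => hx.1).exists_gt
    exact (hvx.trans_le hxv).false
  · obtain ⟨x, hxv, hvx⟩ := (h.mono fun x hx => hx.1).exists_lt
    exact (hxv.trans_le hvx).false

lemma not_eventually_snd (hQ : IsQuadrantAt v Q) : ¬ ∀ᶠ y in 𝓝 v.2, (v.1, y) ∈ Q := by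
  obtain ⟨sx, sy, rfl⟩ := hQ
  intro h
  cases sy
  · obtain ⟨y, hvy, hyv⟩ := (h.mono fun y hy => hy.2).exists_gt
    exact (hvy.trans_le hyv).false
  · obtain ⟨y, hyv, hvy⟩ := (h.mono fun y hy => hy.2).exists_lt
    exact (hyv.trans_le hvy).false

end IsQuadrantAt

namespace IsConvexVertexOf

variable {P : Set (ℝ × ℝ)} {v : ℝ × ℝ}

lemma mem (hv : IsConvexVertexOf P v) : v ∈ P := by
  obtain ⟨-, N, Q, -, hvN, ⟨sx, sy, rfl⟩, hPN⟩ := hv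
  exact ((Set.ext_iff.mp hPN v).mpr ⟨by cases sx <;> cases sy <;> simp, hvN⟩).1

lemma not_eventually_fst (hv : IsConvexVertexOf P v) : ¬ ∀ᶠ x in 𝓝 v.1, (x, v.2) ∈ P := by
  obtain ⟨-, N, Q, hN, hvN, hQ, hPN⟩ := hv
  intro h
  have hN' : ∀ᶠ x in 𝓝 v.1, (x, v.2) ∈ N :=
    (continuous_id.prodMk continuous_const).continuousAt.preimage_mem_nhds (hN.mem_nhds hvN)
  refine hQ.not_eventually_fst ?_
  filter_upwards [h, hN'] with x hxP hxN
  exact (hPN ▸ ⟨hxP, hxN⟩ : (x, v.2) ∈ Q ∩ N).1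

lemma not_eventually_snd (hv : IsConvexVertexOf P v) : ¬ ∀ᶠ y in 𝓝 v.2, (v.1, y) ∈ P := by
  obtain ⟨-, N, Q, hN, hvN, hQ, hPN⟩ := hv
  intro h
  have hN' : ∀ᶠ y in 𝓝 v.2, (v.1, y) ∈ N :=
    (continuous_const.prodMk continuous_id).continuousAt.preimage_mem_nhds (hN.mem_nhds hvN)
  refine hQ.not_eventually_snd ?_
  filter_upwards [h, hN'] with y hyP hyN
  exact (hPN ▸ ⟨hyP, hyN⟩ : (v.1, y) ∈ Q ∩ N).1

lemma mem_corners_of_mem_box {a₁ b₁ a₂ b₂ : ℝ} (hv : IsConvexVertexOf P v)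
    (hK : Set.Icc a₁ b₁ ×ˢ Set.Icc a₂ b₂ ⊆ P) (hvK : v ∈ Set.Icc a₁ b₁ ×ˢ Set.Icc a₂ b₂) :
    v ∈ ({a₁, b₁} ×ˢ {a₂, b₂} : Finset (ℝ × ℝ)) := by
  have h₁ : v.1 ∈ frontier (Set.Icc a₁ b₁) := ⟨subset_closure hvK.1, fun hint =>
    hv.not_eventually_fst <| Eventually.mono (mem_interior_iff_mem_nhds.mp hint)
      fun x hx => hK ⟨hx, hvK.2⟩⟩
  have h₂ : v.2 ∈ frontier (Set.Icc a₂ b₂) := ⟨subset_closure hvK.2, fun hint =>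
    hv.not_eventually_snd <| Eventually.mono (mem_interior_iff_mem_nhds.mp hint)
      fun y hy => hK ⟨hvK.1, hy⟩⟩
  rw [frontier_Icc (hvK.1.1.trans hvK.1.2)] at h₁
  rw [frontier_Icc (hvK.2.1.trans hvK.2.2)] at h₂
  simpa [Finset.mem_product] using And.intro h₁ h₂

end IsConvexVertexOf

lemma IsBox.exists_corners {K : Set (ℝ × ℝ)} (hK : IsBox K) :
    ∃ C : Finset (ℝ × ℝ), C.card ≤ 4 ∧
      ∀ P v, IsConvexVertexOf P v → K ⊆ P → v ∈ K → v ∈ C := by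
  obtain ⟨a₁, b₁, a₂, b₂, -, -, rfl⟩ := hK
  refine ⟨{a₁, b₁} ×ˢ {a₂, b₂}, ?_, fun P v hv hKP hvK => hv.mem_corners_of_mem_box hKP hvK⟩
  rw [Finset.card_product]
  exact Nat.mul_le_mul Finset.card_le_two Finset.card_le_two

lemma ncard_convexVertices_le_of_eq_iUnion_boxes {ι : Type*} [Fintype ι] {P : Set (ℝ × ℝ)}
    {b : ι → Set (ℝ × ℝ)} (hb : ∀ i, IsBox (b i)) (hP : P = ⋃ i, b i) :
    {v | IsConvexVertexOf P v}.ncard ≤ 4 * Fintype.card ι := by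
  choose C hC₄ hC using fun i => (hb i).exists_corners
  have hsub : {v | IsConvexVertexOf P v} ⊆ ↑(Finset.univ.biUnion C) := by
    intro v hv
    obtain ⟨i, hi⟩ := Set.mem_iUnion.mp (hP ▸ hv.mem)
    exact Finset.mem_biUnion.mpr
      ⟨i, Finset.mem_univ i, hC i P v hv (hP ▸ Set.subset_iUnion b i) hi⟩
  calc {v | IsConvexVertexOf P v}.ncard
      ≤ (Finset.univ.biUnion C).card :=
        (Set.ncard_le_ncard hsub (Finset.finite_toSet _)).trans_eq (Set.ncard_coe_finset _)
    _ ≤ Fintype.card ι * 4 := Finset.card_biUnion_le_card_mul _ _ _ fun i _ => hC₄ i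
    _ = 4 * Fintype.card ι := Nat.mul_comm _ _

theorem box_cover_lower_bound_general (P : Set (ℝ × ℝ))
    (c : ℕ)
    (hc : {v : ℝ × ℝ | IsConvexVertexOf P v}.ncard = c) :
    ∀ (n : ℕ) (b : Fin n → Set (ℝ × ℝ)), (∀ i, IsBox (b i)) → P = ⋃ i, b i →
      (c : ℝ) / 4 ≤ n := by
  intro n b hb hPb
  have hcn : c ≤ 4 * n := by
    simpa [hc] using ncard_convexVertices_le_of_eq_iUnion_boxes hb hPb
  rw [div_le_iff₀ four_pos, mul_comm]
  exact_mod_cast hcn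

/-- A rectilinear polygon with `c` convex vertices cannot be written as a
union of fewer than `c/4` axis-aligned boxes. -/
theorem box_cover_lower_bound (P : Set (ℝ × ℝ)) (hP : IsRectilinearPolygon P)
    (c : ℕ) (hcfin : {v : ℝ × ℝ | IsConvexVertexOf P v}.Finite)
    (hc : {v : ℝ × ℝ | IsConvexVertexOf P v}.ncard = c) :
    ∀ (n : ℕ) (b : Fin n → Set (ℝ × ℝ)), (∀ i, IsBox (b i)) → P = ⋃ i, b i →
      (c : ℝ) / 4 ≤ n :=
  box_cover_lower_bound_general P c hc
end
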